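/- arXiv:0705.4074 — 7 statements merged into one kernel-verified Lean document; each statement's English description precedes it below -/
import Mathlib

section
/- If A is a bounded linear operator on a Hilbert space H, f_δ ∈ H with ‖f_δ‖ > δ > 0, a > 0, and u_a = (A*A + aI)^{-1} A* f_δ satisfies ‖A u_a − f_δ‖ = δ, then a ≤ δ‖A‖² / (‖f_δ‖ − δ). -/
/-!
Writing the normal equation as `a • u = A† (f - A u)` gives `|a| ‖u‖ ≤ ‖A‖ δ`, while the reverse
triangle inequality gives `‖f‖ - δ ≤ ‖A u‖ ≤ ‖A‖ ‖u‖`. Multiplying the second by `|a|` and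
using the first yields `|a| (‖f‖ - δ) ≤ ‖A‖² δ`.
-/

open ContinuousLinearMap

section Tikhonov

variable {𝕜 E F : Type*} [RCLike 𝕜]
  [NormedAddCommGroup E] [InnerProductSpace 𝕜 E] [CompleteSpace E]
  [NormedAddCommGroup F] [InnerProductSpace 𝕜 F] [CompleteSpace F]

theorem smul_eq_adjoint_residual_of_tikhonov {A : E →L[𝕜] F} {f : F} {u : E} {a : 𝕜}
    (hu : (adjoint A ∘L A) u + a • u = adjoint A f) :
    a • u = adjoint A (f - A u) := by
  rw [map_sub, ← hu, comp_apply, add_sub_cancel_left]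

theorem norm_smul_le_opNorm_mul_residual_of_tikhonov {A : E →L[𝕜] F} {f : F} {u : E} {a : 𝕜}
    (hu : (adjoint A ∘L A) u + a • u = adjoint A f) :
    ‖a‖ * ‖u‖ ≤ ‖A‖ * ‖A u - f‖ :=
  calc ‖a‖ * ‖u‖ = ‖adjoint A (f - A u)‖ := by
        rw [← norm_smul, smul_eq_adjoint_residual_of_tikhonov hu]
    _ ≤ ‖adjoint A‖ * ‖f - A u‖ := le_opNorm _ _
    _ = ‖A‖ * ‖A u - f‖ := by rw [LinearIsometryEquiv.norm_map, norm_sub_rev]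

theorem norm_mul_sub_residual_le_of_tikhonov {A : E →L[𝕜] F} {f : F} {u : E} {a : 𝕜}
    (hu : (adjoint A ∘L A) u + a • u = adjoint A f) :
    ‖a‖ * (‖f‖ - ‖A u - f‖) ≤ ‖A‖ ^ 2 * ‖A u - f‖ := by
  have hf : ‖f‖ - ‖A u - f‖ ≤ ‖A u‖ := by
    linarith [norm_le_norm_add_norm_sub' f (A u), norm_sub_rev f (A u)]
  calc ‖a‖ * (‖f‖ - ‖A u - f‖) ≤ ‖a‖ * (‖A‖ * ‖u‖) :=
        mul_le_mul_of_nonneg_left (hf.trans (le_opNorm A u)) (norm_nonneg a)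
    _ = ‖A‖ * (‖a‖ * ‖u‖) := by ring
    _ ≤ ‖A‖ * (‖A‖ * ‖A u - f‖) :=
        mul_le_mul_of_nonneg_left (norm_smul_le_opNorm_mul_residual_of_tikhonov hu) (norm_nonneg A)
    _ = ‖A‖ ^ 2 * ‖A u - f‖ := by ring

end Tikhonov

theorem dsm_aM_upper_bound_general
    {H : Type*} [NormedAddCommGroup H] [InnerProductSpace ℝ H] [CompleteSpace H]
    (A : H →L[ℝ] H) (fδ : H) (a δ : ℝ)
    (hf : δ < ‖fδ‖) (u : H)
    (hu : (adjoint A).comp A u + a • u = adjoint A fδ)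
    (hdisc : ‖A u - fδ‖ = δ) :
    a ≤ δ * ‖A‖ ^ 2 / (‖fδ‖ - δ) := by
  have hbound := norm_mul_sub_residual_le_of_tikhonov hu
  rw [hdisc, Real.norm_eq_abs] at hbound
  rw [le_div_iff₀ (sub_pos.mpr hf)]
  calc a * (‖fδ‖ - δ) ≤ |a| * (‖fδ‖ - δ) :=
        mul_le_mul_of_nonneg_right (le_abs_self a) (sub_pos.mpr hf).le
    _ ≤ δ * ‖A‖ ^ 2 := by linarith

theorem dsm_aM_upper_bound
    {H : Type*} [NormedAddCommGroup H] [InnerProductSpace ℝ H] [CompleteSpace H]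
    (A : H →L[ℝ] H) (fδ : H) (a δ : ℝ) (ha : 0 < a) (hδ : 0 < δ)
    (hf : δ < ‖fδ‖) (u : H)
    (hu : (adjoint A).comp A u + a • u = adjoint A fδ)
    (hdisc : ‖A u - fδ‖ = δ) :
    a ≤ δ * ‖A‖ ^ 2 / (‖fδ‖ - δ) :=
  dsm_aM_upper_bound_general A fδ a δ hf u hu hdisc
end

section
/- For a bounded linear operator A on a Hilbert space H and f ∈ H, the function φ(a) = ‖A (A*A + aI)^{-1} A* f − f‖ is monotonically nondecreasing in a for a > 0 (equivalently, the discrepancy is a monotone function of the regularization parameter). -/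
/-! With `r a = A (u a) - f`, the normal equation gives `A* (r a) = -a • u a`, so for `a < b`
`‖r b‖² = ‖r a‖² + 2a ⟪u a, u a - u b⟫ + ‖A (u b - u a)‖²`.
Subtracting the normal equations at `a` and `b` gives
`(b - a) ⟪u a, u a - u b⟫ = ‖A (u a - u b)‖² + b ‖u a - u b‖² ≥ 0`, so every term is nonnegative. -/

open ContinuousLinearMap
open scoped RealInnerProductSpace

section Tikhonov

variable {E F : Type*} [NormedAddCommGroup E] [InnerProductSpace ℝ E] [CompleteSpace E]
  [NormedAddCommGroup F] [InnerProductSpace ℝ F] [CompleteSpace F]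

/-- For `a > 0` this says `u = (A* A + a I)⁻¹ A* f`. -/
def IsTikhonovSolution (A : E →L[ℝ] F) (f : F) (a : ℝ) (u : E) : Prop :=
  adjoint A (A u) + a • u = adjoint A f

variable {A : E →L[ℝ] F} {f : F} {a b : ℝ} {u v : E}

namespace IsTikhonovSolution

theorem adjoint_residual (hu : IsTikhonovSolution A f a u) :
    adjoint A (A u - f) = -(a • u) := by
  rw [map_sub, ← hu]
  abel

theorem inner_residual_map_sub (hu : IsTikhonovSolution A f a u) (v : E) :
    ⟪A u - f, A (v - u)⟫ = a * ⟪u, u - v⟫ := by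
  rw [← adjoint_inner_left, hu.adjoint_residual, inner_neg_left, real_inner_smul_left,
    ← neg_sub u v, inner_neg_right, neg_mul_eq_mul_neg, neg_neg]

theorem sub_mul_inner_sub (hu : IsTikhonovSolution A f a u) (hv : IsTikhonovSolution A f b v) :
    (b - a) * ⟪u, u - v⟫ = ‖A (u - v)‖ ^ 2 + b * ‖u - v‖ ^ 2 := by
  have hnormal : adjoint A (A (u - v)) + b • (u - v) = (b - a) • u := by
    rw [map_sub, map_sub, eq_sub_of_add_eq hu, eq_sub_of_add_eq hv, sub_smul, smul_sub]
    abel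
  have := congrArg (fun x : E => ⟪x, u - v⟫) hnormal
  simp only [inner_add_left, real_inner_smul_left, adjoint_inner_left] at this
  rw [← this, real_inner_self_eq_norm_sq, real_inner_self_eq_norm_sq]

theorem inner_sub_nonneg (hu : IsTikhonovSolution A f a u) (hv : IsTikhonovSolution A f b v)
    (hb : 0 ≤ b) (hab : a < b) : 0 ≤ ⟪u, u - v⟫ := by
  have hpos : 0 ≤ (b - a) * ⟪u, u - v⟫ := by
    rw [hu.sub_mul_inner_sub hv]
    positivity
  exact (mul_nonneg_iff_of_pos_left (sub_pos.mpr hab)).mp hpos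

theorem norm_residual_le (hu : IsTikhonovSolution A f a u) (hv : IsTikhonovSolution A f b v)
    (ha : 0 ≤ a) (hab : a < b) : ‖A u - f‖ ≤ ‖A v - f‖ := by
  have hcross : 0 ≤ ⟪A u - f, A (v - u)⟫ := by
    rw [hu.inner_residual_map_sub]
    exact mul_nonneg ha (hu.inner_sub_nonneg hv (ha.trans hab.le) hab)
  have hexpand : A v - f = (A u - f) + A (v - u) := by
    rw [map_sub]
    abel
  have hsq : ‖A u - f‖ ^ 2 ≤ ‖A v - f‖ ^ 2 := by
    rw [hexpand, norm_add_sq_real]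
    nlinarith [sq_nonneg ‖A (v - u)‖]
  exact (pow_le_pow_iff_left₀ (norm_nonneg _) (norm_nonneg _) two_ne_zero).mp hsq

end IsTikhonovSolution

end Tikhonov

theorem discrepancy_monotone
    {H : Type*} [NormedAddCommGroup H] [InnerProductSpace ℝ H] [CompleteSpace H]
    (A : H →L[ℝ] H) (f : H) (u : ℝ → H)
    (hu : ∀ a > (0:ℝ), (adjoint A).comp A (u a) + a • (u a) = adjoint A f) :
    ∀ a b : ℝ, 0 < a → a ≤ b → ‖A (u a) - f‖ ≤ ‖A (u b) - f‖ := by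
  intro a b ha hab
  rcases hab.eq_or_lt with rfl | hlt
  · exact le_rfl
  exact IsTikhonovSolution.norm_residual_le (hu a ha) (hu b (ha.trans hlt)) ha.le hlt
end

section
/- The inverse of the n×n Hilbert matrix H_n (with entries (H_n)_{ij} = 1/(i+j−1)) has integer entries given by h_{ij} = (−1)^{i+j} (i+j−1) C(n+i−1, n−j) C(n+j−1, n−i) C(i+j−2, i−1)², i.e., the matrix with these entries is a two-sided inverse of H_n. -/
/-! The Hilbert matrix is the Cauchy matrix `(x i - y k)⁻¹` with nodes `x i = i` and
`y k = -(k + 1)`. For any Cauchy matrix, interpolating `∏_{m ≠ j} (X - x m)` at the nodes `y`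
(Lagrange, barycentric form) and evaluating at `x i` exhibits an explicit right inverse built from
the nodal polynomials and nodal weights. For these arithmetic-progression nodes all those products
are factorials, and the inverse entries collapse to `c k * c j / (k + j + 1)` with
`c k = (-1) ^ k (n + k)! / (k! ^ 2 (n - k - 1)!)`, which is the binomial formula. -/

open Finset Polynomial Lagrange Nat

section Cauchy

variable {F ι : Type*} [Field F] [DecidableEq ι]

noncomputable def cauchyInvEntry (s : Finset ι) (x y : ι → F) (k j : ι) : F :=
  nodalWeight s y k * (nodal s x).eval (y k) * (y k - x j)⁻¹ *
    (nodalWeight s x j * (nodal s y).eval (x j))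

theorem sum_inv_sub_mul_cauchyInvEntry {s : Finset ι} {x y : ι → F} (hx : Set.InjOn x s)
    (hy : Set.InjOn y s) (hxy : ∀ i ∈ s, ∀ k ∈ s, x i ≠ y k) {i j : ι} (hi : i ∈ s)
    (hj : j ∈ s) :
    ∑ k ∈ s, (x i - y k)⁻¹ * cauchyInvEntry s x y k j = if i = j then 1 else 0 := by
  set f := nodal (s.erase j) x
  have hdeg : f.degree < #s := by
    rw [degree_nodal, card_erase_of_mem hj]
    exact_mod_cast Nat.sub_lt (card_pos.2 ⟨j, hj⟩) one_pos
  have hf_node : ∀ k ∈ s, (nodal s x).eval (y k) * (y k - x j)⁻¹ = f.eval (y k) := by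
    intro k hk
    rw [nodal_eq_mul_nodal_erase hj, eval_mul, eval_sub, eval_X, eval_C, mul_right_comm,
      mul_inv_cancel₀ (sub_ne_zero.2 (hxy j hj k hk).symm), one_mul]
  have hbary : f.eval (x i) = (nodal s y).eval (x i) *
      ∑ k ∈ s, nodalWeight s y k * (x i - y k)⁻¹ * f.eval (y k) := by
    rw [← eval_interpolate_not_at_node _ (fun k hk => hxy i hi k hk), ← eq_interpolate hy hdeg]
  have hsum : ∑ k ∈ s, (x i - y k)⁻¹ * cauchyInvEntry s x y k j =
      nodalWeight s x j * (nodal s y).eval (x j) / (nodal s y).eval (x i) * f.eval (x i) := by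
    rw [hbary, mul_sum, mul_sum]
    refine sum_congr rfl fun k hk => ?_
    rw [cauchyInvEntry, ← hf_node k hk]
    field_simp [eval_nodal_not_at_node (hxy i hi)]
  rw [hsum]
  split_ifs with hij
  · subst hij
    have hfi : f.eval (x i) = (nodalWeight s x i)⁻¹ := by
      rw [nodalWeight_eq_eval_nodal_erase_inv, inv_inv]
    rw [hfi]
    field_simp [eval_nodal_not_at_node (hxy i hi), nodalWeight_ne_zero hx hi]
  · rw [eval_nodal_at_node (mem_erase.2 ⟨hij, hi⟩), mul_zero]

end Cauchy

theorem prod_range_add_add_one (q n : ℕ) :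
    ∏ m ∈ range n, ((q : ℚ) + m + 1) = (q + n)! / q ! := by
  rw [eq_div_iff (by positivity), ← factorial_mul_ascFactorial, ascFactorial_eq_prod_range]
  push_cast
  exact (mul_comm _ _).trans (congrArg _ (prod_congr rfl fun m _ => by ring))

theorem prod_range_sub_self (k : ℕ) : ∏ m ∈ range k, ((m : ℚ) - k) = (-1) ^ k * k ! := by
  have hreflect : ∀ m ∈ range k, (((k - 1 - m : ℕ) : ℚ) - k) = -1 * ((m : ℚ) + 1) := by
    intro m hm
    rw [cast_sub (by simp at hm; omega), cast_sub (by simp at hm; omega)]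
    ring
  rw [← prod_range_reflect, prod_congr rfl hreflect, prod_mul_distrib, prod_const, card_range,
    factorial_eq_prod_range_add_one]
  push_cast
  rfl

theorem prod_range_erase_sub {n k : ℕ} (hk : k < n) :
    ∏ m ∈ (range n).erase k, ((m : ℚ) - k) = (-1) ^ k * k ! * (n - k - 1)! := by
  induction n, hk using Nat.le_induction with
  | base =>
    rw [range_add_one, erase_insert notMem_range_self, prod_range_sub_self]
    simp
  | succ n hkn ih =>
    rw [range_add_one, erase_insert_of_ne (by omega), prod_insert (by simp), ih,
      show n + 1 - k - 1 = (n - k - 1) + 1 by omega, factorial_succ,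
      show n - k - 1 + 1 = n - k by omega, cast_mul, cast_sub (by omega : k ≤ n)]
    ring

def hilbertInvEntry (n k j : ℕ) : ℚ :=
  (-1 : ℚ) ^ (k + j) * (k + j + 1 : ℚ) * (Nat.choose (n + k) (n - j - 1) : ℚ) *
    (Nat.choose (n + j) (n - k - 1) : ℚ) * (Nat.choose (k + j) k : ℚ) ^ 2

def hilbertInvCoeff (n k : ℕ) : ℚ := (-1) ^ k * (n + k)! / (k ! ^ 2 * (n - k - 1)!)

theorem hilbertInvEntry_eq {n k j : ℕ} (hk : k < n) (hj : j < n) :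
    hilbertInvEntry n k j = hilbertInvCoeff n k * hilbertInvCoeff n j / (k + j + 1) := by
  have h₁ : ((n + k).choose (n - j - 1) : ℚ) = (n + k)! / ((n - j - 1)! * (k + j + 1)!) := by
    rw [cast_choose ℚ (by omega), show n + k - (n - j - 1) = k + j + 1 by omega]
  have h₂ : ((n + j).choose (n - k - 1) : ℚ) = (n + j)! / ((n - k - 1)! * (k + j + 1)!) := by
    rw [cast_choose ℚ (by omega), show n + j - (n - k - 1) = k + j + 1 by omega]
  have h₃ : ((k + j).choose k : ℚ) = (k + j)! / (k ! * j !) := by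
    rw [cast_choose ℚ (by omega), add_tsub_cancel_left]
  rw [hilbertInvEntry, hilbertInvCoeff, hilbertInvCoeff, h₁, h₂, h₃, factorial_succ, pow_add]
  push_cast
  field_simp

theorem eval_nodal_neg_add_one (n q : ℕ) :
    (nodal (range n) fun m : ℕ => -((m : ℚ) + 1)).eval (q : ℚ) = (q + n)! / q ! := by
  rw [eval_nodal, ← prod_range_add_add_one]
  exact prod_congr rfl fun m _ => by ring

theorem eval_nodal_natCast (n k : ℕ) :
    (nodal (range n) ((↑) : ℕ → ℚ)).eval (-((k : ℚ) + 1)) = (-1) ^ n * ((k + n)! / k !) := by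
  have hneg : ∀ m ∈ range n, -((k : ℚ) + 1) - m = -((k : ℚ) + m + 1) := fun m _ => by ring
  rw [eval_nodal, prod_congr rfl hneg, prod_neg, card_range, prod_range_add_add_one]

theorem nodalWeight_natCast {n j : ℕ} (hj : j < n) :
    nodalWeight (range n) ((↑) : ℕ → ℚ) j =
      ((-1 : ℚ) ^ (n - 1) * ((-1) ^ j * j ! * (n - j - 1)!))⁻¹ := by
  have hneg : ∀ m ∈ (range n).erase j, (j : ℚ) - m = -((m : ℚ) - j) := fun m _ => by ring
  rw [nodalWeight_eq_eval_nodal_erase_inv, eval_nodal, prod_congr rfl hneg, prod_neg,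
    card_erase_of_mem (mem_range.2 hj), card_range, prod_range_erase_sub hj]

theorem nodalWeight_neg_add_one {n k : ℕ} (hk : k < n) :
    nodalWeight (range n) (fun m : ℕ => -((m : ℚ) + 1)) k =
      ((-1 : ℚ) ^ k * k ! * (n - k - 1)!)⁻¹ := by
  rw [nodalWeight_eq_eval_nodal_erase_inv, eval_nodal, ← prod_range_erase_sub hk]
  exact congrArg _ (prod_congr rfl fun m _ => by ring)

theorem cauchyInvEntry_hilbert {n k j : ℕ} (hk : k < n) (hj : j < n) :
    cauchyInvEntry (range n) ((↑) : ℕ → ℚ) (fun m => -((m : ℚ) + 1)) k j =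
      hilbertInvEntry n k j := by
  obtain ⟨n, rfl⟩ : ∃ m, n = m + 1 := ⟨n - 1, by omega⟩
  rw [cauchyInvEntry, nodalWeight_natCast hj, nodalWeight_neg_add_one hk, eval_nodal_natCast,
    eval_nodal_neg_add_one, hilbertInvEntry_eq hk hj, hilbertInvCoeff, hilbertInvCoeff,
    add_tsub_cancel_right, show -((k : ℚ) + 1) - j = -(k + j + 1) by ring]
  have hsq (m : ℕ) : ((-1 : ℚ) ^ m) ^ 2 = 1 := by rw [← pow_mul, pow_mul', neg_one_sq, one_pow]
  field_simp
  rw [hsq, hsq, add_comm n 1, add_comm k, add_comm j]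
  ring

theorem sum_inv_add_mul_hilbertInvEntry {n i j : ℕ} (hi : i < n) (hj : j < n) :
    ∑ k ∈ range n, ((i : ℚ) + k + 1)⁻¹ * hilbertInvEntry n k j = if i = j then 1 else 0 := by
  have hx : Set.InjOn ((↑) : ℕ → ℚ) (range n) := Nat.cast_injective.injOn
  have hy : Set.InjOn (fun m : ℕ => -((m : ℚ) + 1)) (range n) := fun a _ b _ h => by simpa using h
  have hxy : ∀ i ∈ range n, ∀ k ∈ range n, (i : ℚ) ≠ -((k : ℚ) + 1) := fun i _ k _ h => by
    have : (0 : ℚ) < i + k + 1 := by positivity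
    linarith
  rw [← sum_inv_sub_mul_cauchyInvEntry hx hy hxy (mem_range.2 hi) (mem_range.2 hj)]
  refine sum_congr rfl fun k hk => ?_
  rw [cauchyInvEntry_hilbert (mem_range.1 hk) hj, sub_neg_eq_add, add_assoc]

theorem hilbert_matrix_inverse (n : ℕ)
    (Hn B : Matrix (Fin n) (Fin n) ℚ)
    (hH : ∀ i j : Fin n, Hn i j = 1 / ((i : ℕ) + (j : ℕ) + 1 : ℚ))
    (hB : ∀ i j : Fin n, B i j =
      (-1 : ℚ) ^ ((i : ℕ) + (j : ℕ)) * ((i : ℕ) + (j : ℕ) + 1 : ℚ) *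
        (Nat.choose (n + (i : ℕ)) (n - (j : ℕ) - 1) : ℚ) *
        (Nat.choose (n + (j : ℕ)) (n - (i : ℕ) - 1) : ℚ) *
        ((Nat.choose ((i : ℕ) + (j : ℕ)) (i : ℕ) : ℚ)) ^ 2) :
    Hn * B = 1 ∧ B * Hn = 1 := by
  have hHB : Hn * B = 1 := by
    ext i j
    have hsum := sum_inv_add_mul_hilbertInvEntry i.isLt j.isLt
    simp only [Fin.val_inj, ← Fin.sum_univ_eq_sum_range] at hsum
    rw [Matrix.mul_apply, Matrix.one_apply, ← hsum]
    refine sum_congr rfl fun k _ => ?_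
    rw [hH, hB, one_div, hilbertInvEntry]
  exact ⟨hHB, mul_eq_one_comm.mp hHB⟩
end

section
/- If A is a bounded linear operator, then for f in the range of A, say f = A y with y ⟂ ker A, the regularized solutions u_a = (A*A + aI)^{-1} A* f converge to y as a → 0⁺. -/
open ContinuousLinearMap Filter
open scoped RealInnerProductSpace

theorem regularized_solutions_converge
    {H : Type*} [NormedAddCommGroup H] [InnerProductSpace ℝ H] [CompleteSpace H]
    (A : H →L[ℝ] H) (y : H) (hy : y ∈ (LinearMap.ker (A : H →ₗ[ℝ] H))ᗮ)
    (u : ℝ → H)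
    (hu : ∀ a > (0:ℝ), (adjoint A).comp A (u a) + a • (u a) = adjoint A (A y)) :
    Tendsto u (nhdsWithin 0 (Set.Ioi 0)) (nhds y) := by
  set T : H →L[ℝ] H := (adjoint A).comp A with hT
  set K : Submodule ℝ H := LinearMap.range (T : H →ₗ[ℝ] H) with hK
  -- y is in the closure of the range of T
  have hyK : y ∈ Kᗮᗮ := by
    intro x hx
    have hTx : (⟪T x, x⟫) = 0 := hx (T x) ⟨x, rfl⟩
    have hAx : A x = 0 := by
      have : (⟪A x, A x⟫) = 0 := by
        rw [← hTx]; simp [hT, ContinuousLinearMap.comp_apply, adjoint_inner_left]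
      exact inner_self_eq_zero.mp this
    exact hy x (LinearMap.mem_ker.mpr hAx)
  have hclos : y ∈ closure (K : Set H) := by
    have := Submodule.orthogonal_orthogonal_eq_closure (K := K)
    rw [this] at hyK
    exact hyK
  rw [Metric.tendsto_nhdsWithin_nhds]
  intro ε hε
  obtain ⟨b, hbK, hby⟩ := Metric.mem_closure_iff.mp hclos (ε / 2) (by positivity)
  obtain ⟨z, hz⟩ := hbK
  refine ⟨ε ^ 2 / (2 * (‖A z‖ ^ 2 + 1)), by positivity, ?_⟩
  intro a ha hda
  have ha' : (0 : ℝ) < a := ha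
  have hadist : a < ε ^ 2 / (2 * (‖A z‖ ^ 2 + 1)) := by
    rw [Real.dist_eq] at hda
    calc a = |a - 0| := by rw [sub_zero, abs_of_pos ha']
    _ < _ := hda
  have heq := hu a ha'
  set w : H := u a - y with hw
  set r : H := y - b with hr
  have hTw : T w + a • w = -(a • y) := by
    have hTy : T y = adjoint A (A y) := rfl
    have h : T (u a) + a • (u a) = T y := heq
    simp only [hw, map_sub, smul_sub]
    linear_combination (norm := module) h
  -- scalar identity
  have key : ‖A w‖ ^ 2 + a * ‖w‖ ^ 2 = -(a * ((⟪A z, A w⟫) + (⟪r, w⟫))) := by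
    have h1 : (⟪T w + a • w, w⟫) = (⟪-(a • y), w⟫) := by rw [hTw]
    have h2 : (⟪T w, w⟫) = ‖A w‖ ^ 2 := by
      simp [hT, ContinuousLinearMap.comp_apply, adjoint_inner_left,
        real_inner_self_eq_norm_sq]
    have h3 : (⟪y, w⟫) = (⟪A z, A w⟫) + (⟪r, w⟫) := by
      have : y = T z + r := by rw [hr, show T z = b from hz]; abel
      rw [this, inner_add_left]
      congr 1
      simp [hT, ContinuousLinearMap.comp_apply, adjoint_inner_left]
    rw [inner_add_left, real_inner_smul_left, inner_neg_left, real_inner_smul_left,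
      real_inner_self_eq_norm_sq, h2, h3] at h1
    linarith [h1]
  have cs1 : |(⟪A z, A w⟫)| ≤ ‖A z‖ * ‖A w‖ := abs_real_inner_le_norm _ _
  have cs2 : |(⟪r, w⟫)| ≤ ‖r‖ * ‖w‖ := abs_real_inner_le_norm _ _
  have hmain : ‖w‖ ^ 2 ≤ a * ‖A z‖ ^ 2 + ‖r‖ ^ 2 := by
    have h1 := abs_le.mp cs1
    have h2 := abs_le.mp cs2
    nlinarith [sq_nonneg (‖A w‖ - a * ‖A z‖), mul_nonneg ha'.le (sq_nonneg (‖w‖ - ‖r‖)),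
      sq_nonneg (‖A w‖), norm_nonneg w, norm_nonneg r]
  have hr2 : ‖r‖ < ε / 2 := by
    rw [hr, ← dist_eq_norm]; exact hby
  have haz : a * ‖A z‖ ^ 2 < ε ^ 2 / 2 := by
    have h0 : (0:ℝ) < ‖A z‖ ^ 2 + 1 := by positivity
    calc a * ‖A z‖ ^ 2 ≤ a * (‖A z‖ ^ 2 + 1) := by nlinarith
    _ < ε ^ 2 / (2 * (‖A z‖ ^ 2 + 1)) * (‖A z‖ ^ 2 + 1) := by
        apply mul_lt_mul_of_pos_right hadist h0
    _ = ε ^ 2 / 2 := by field_simp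
  have hwnorm : ‖w‖ < ε := by
    nlinarith [norm_nonneg w, norm_nonneg r, sq_nonneg (‖r‖), hε]
  rw [dist_eq_norm]
  exact hwnorm
end

section
/- The discrepancy φ(a) = ‖A(A*A+aI)^{-1}A*f_δ − f_δ‖ satisfies lim_{a→∞} φ(a) = ‖f_δ‖ and, if f_δ = f + e with f ∈ closure(Range A) and ‖e‖ ≤ δ, lim_{a→0⁺} φ(a) ≤ δ. Consequently, if ‖f_δ‖ > δ, there exists a > 0 with φ(a) = c·δ for any c with lim_{a→0}φ(a) < cδ < ‖f_δ‖ (by continuity of φ). -/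
/-!
The Tikhonov solution `u a` minimises `‖A v - fδ‖² + a ‖v‖²`. Comparing the minimisers for two
parameters shows that the discrepancy `φ a = ‖A (u a) - fδ‖` is monotone, so it has a limit `L`
as `a → 0⁺`; comparing `u a` with an arbitrary `w` gives `L ≤ ‖A w - fδ‖`, hence `L` is at most
the distance from `fδ` to the range of `A`, which is `≤ ‖e‖ ≤ δ`. The bound `‖u a‖ ≤ ‖A* fδ‖ / a`
gives the limit `‖fδ‖` at infinity and, applied to `u a - u b`, local Lipschitz continuity of
`u`, so the intermediate value theorem produces the parameter with `φ a = c δ`.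
-/

open ContinuousLinearMap Filter Set Metric Topology

section TikhonovRegularization

variable {E F : Type*} [NormedAddCommGroup E] [InnerProductSpace ℝ E] [CompleteSpace E]
  [NormedAddCommGroup F] [InnerProductSpace ℝ F] [CompleteSpace F]

namespace ContinuousLinearMap

theorem norm_le_div_of_adjoint_comp_add_smul_eq (A : E →L[ℝ] F) {a : ℝ} (ha : 0 < a)
    {x z : E} (h : adjoint A (A x) + a • x = z) : ‖x‖ ≤ ‖z‖ / a := by
  have hinner : inner ℝ z x = ‖A x‖ ^ 2 + a * ‖x‖ ^ 2 := by
    rw [← h, inner_add_left, adjoint_inner_left, real_inner_self_eq_norm_sq,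
      real_inner_smul_left, real_inner_self_eq_norm_sq]
  have hcs : inner ℝ z x ≤ ‖z‖ * ‖x‖ := real_inner_le_norm z x
  rw [le_div_iff₀ ha]
  rcases (norm_nonneg x).eq_or_lt with hx | hx
  · simp [← hx]
  · nlinarith [sq_nonneg ‖A x‖]

theorem tikhonov_le_of_adjoint_comp_add_smul_eq (A : E →L[ℝ] F) (y : F) {a : ℝ} (ha : 0 ≤ a)
    {x : E} (h : adjoint A (A x) + a • x = adjoint A y) (v : E) :
    ‖A x - y‖ ^ 2 + a * ‖x‖ ^ 2 ≤ ‖A v - y‖ ^ 2 + a * ‖v‖ ^ 2 := by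
  obtain ⟨w, rfl⟩ : ∃ w, v = x + w := ⟨v - x, by abel⟩
  have hcross : inner ℝ (A x - y) (A w) + a * inner ℝ x w = 0 := by
    rw [← adjoint_inner_left, ← real_inner_smul_left, ← inner_add_left, map_sub, ← h]
    simp
  have hAv : A (x + w) - y = (A x - y) + A w := by rw [map_add]; abel
  rw [hAv, norm_add_sq_real, norm_add_sq_real]
  nlinarith [sq_nonneg ‖A w‖, mul_nonneg ha (sq_nonneg ‖w‖)]

end ContinuousLinearMap

section Discrepancy

variable (A : E →L[ℝ] F) (y : F) {u : ℝ → E}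

theorem tendsto_discrepancy_atTop
    (hu : ∀ a > 0, adjoint A (A (u a)) + a • u a = adjoint A y) :
    Tendsto (fun a => ‖A (u a) - y‖) atTop (𝓝 ‖y‖) := by
  rw [tendsto_iff_dist_tendsto_zero]
  refine squeeze_zero' (.of_forall fun _ => dist_nonneg) ?_
    (tendsto_const_nhds.div_atTop tendsto_id : Tendsto (fun a => ‖A‖ * ‖adjoint A y‖ / a) _ _)
  filter_upwards [eventually_gt_atTop 0] with a ha
  calc dist ‖A (u a) - y‖ ‖y‖ = |‖A (u a) - y‖ - ‖-y‖| := by rw [Real.dist_eq, norm_neg]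
    _ ≤ ‖A (u a) - y - -y‖ := abs_norm_sub_norm_le _ _
    _ = ‖A (u a)‖ := by rw [sub_neg_eq_add, sub_add_cancel]
    _ ≤ ‖A‖ * ‖u a‖ := A.le_opNorm _
    _ ≤ ‖A‖ * (‖adjoint A y‖ / a) := by
        gcongr; exact A.norm_le_div_of_adjoint_comp_add_smul_eq ha (hu a ha)
    _ = ‖A‖ * ‖adjoint A y‖ / a := by ring

theorem discrepancy_monotoneOn
    (hu : ∀ a > 0, adjoint A (A (u a)) + a • u a = adjoint A y) :
    MonotoneOn (fun a => ‖A (u a) - y‖) (Ioi 0) := by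
  intro a ha b hb hab
  have hab' := A.tikhonov_le_of_adjoint_comp_add_smul_eq y (le_of_lt ha) (hu a ha) (u b)
  have hba := A.tikhonov_le_of_adjoint_comp_add_smul_eq y (le_of_lt hb) (hu b hb) (u a)
  have hsol : (b - a) * (‖u b‖ ^ 2 - ‖u a‖ ^ 2) ≤ 0 := by linarith
  have hsq : ‖A (u a) - y‖ ^ 2 ≤ ‖A (u b) - y‖ ^ 2 := by
    rcases hab.eq_or_lt with rfl | hlt
    · rfl
    have : ‖u b‖ ^ 2 ≤ ‖u a‖ ^ 2 := by nlinarith [sub_pos.mpr hlt]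
    nlinarith [mul_le_mul_of_nonneg_left this (le_of_lt (mem_Ioi.mp ha))]
  exact (pow_le_pow_iff_left₀ (norm_nonneg _) (norm_nonneg _) two_ne_zero).mp hsq

theorem tendsto_discrepancy_nhdsGT_zero
    (hu : ∀ a > 0, adjoint A (A (u a)) + a • u a = adjoint A y) :
    Tendsto (fun a => ‖A (u a) - y‖) (𝓝[>] 0)
      (𝓝 (sInf ((fun a => ‖A (u a) - y‖) '' Ioi 0))) :=
  (discrepancy_monotoneOn A y hu).tendsto_nhdsGT ⟨0, by rintro _ ⟨a, -, rfl⟩; positivity⟩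

theorem limit_discrepancy_le_infDist
    (hu : ∀ a > 0, adjoint A (A (u a)) + a • u a = adjoint A y) {L : ℝ}
    (hL : Tendsto (fun a => ‖A (u a) - y‖) (𝓝[>] 0) (𝓝 L)) :
    L ≤ infDist y (range A) := by
  have hL0 : 0 ≤ L := ge_of_tendsto' hL fun _ => norm_nonneg _
  rw [le_infDist (range_nonempty A)]
  rintro _ ⟨w, rfl⟩
  have hbound : Tendsto (fun a => ‖A w - y‖ ^ 2 + a * ‖w‖ ^ 2) (𝓝[>] 0) (𝓝 (‖A w - y‖ ^ 2)) := by
    have : Continuous fun a : ℝ => ‖A w - y‖ ^ 2 + a * ‖w‖ ^ 2 := by fun_prop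
    simpa using this.continuousWithinAt.tendsto (x := 0) (s := Ioi 0)
  have hsq : L ^ 2 ≤ ‖A w - y‖ ^ 2 := by
    refine le_of_tendsto_of_tendsto (hL.pow 2) hbound ?_
    filter_upwards [self_mem_nhdsWithin] with a ha
    have := A.tikhonov_le_of_adjoint_comp_add_smul_eq y (le_of_lt ha) (hu a ha) w
    nlinarith [mul_nonneg (le_of_lt (mem_Ioi.mp ha)) (sq_nonneg ‖u a‖)]
  rw [dist_comm, dist_eq_norm]
  exact (pow_le_pow_iff_left₀ hL0 (norm_nonneg _) two_ne_zero).mp hsq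

theorem lipschitzOnWith_of_adjoint_comp_add_smul_eq
    (hu : ∀ a > 0, adjoint A (A (u a)) + a • u a = adjoint A y) {a₀ : ℝ} (ha₀ : 0 < a₀) :
    LipschitzOnWith (‖adjoint A y‖ / a₀ ^ 2).toNNReal u (Ici a₀) := by
  refine .of_dist_le_mul fun x hx z hz => ?_
  have hx0 : 0 < x := ha₀.trans_le hx
  have hz0 : 0 < z := ha₀.trans_le hz
  have hdiff : adjoint A (A (u x - u z)) + x • (u x - u z) = (z - x) • u z := by
    rw [map_sub, map_sub, eq_sub_of_add_eq (hu x hx0), eq_sub_of_add_eq (hu z hz0), sub_smul,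
      smul_sub]
    abel
  have huz : ‖u z‖ ≤ ‖adjoint A y‖ / a₀ :=
    (A.norm_le_div_of_adjoint_comp_add_smul_eq hz0 (hu z hz0)).trans
      (div_le_div_of_nonneg_left (norm_nonneg _) ha₀ hz)
  rw [dist_eq_norm, Real.dist_eq, Real.coe_toNNReal _ (by positivity)]
  calc ‖u x - u z‖ ≤ ‖(z - x) • u z‖ / x := A.norm_le_div_of_adjoint_comp_add_smul_eq hx0 hdiff
    _ = |x - z| * ‖u z‖ / x := by rw [norm_smul, Real.norm_eq_abs, abs_sub_comm]
    _ ≤ |x - z| * (‖adjoint A y‖ / a₀) / a₀ := by gcongr; exact hx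
    _ = ‖adjoint A y‖ / a₀ ^ 2 * |x - z| := by ring

theorem continuousOn_of_adjoint_comp_add_smul_eq
    (hu : ∀ a > 0, adjoint A (A (u a)) + a • u a = adjoint A y) : ContinuousOn u (Ioi 0) := by
  intro a (ha : 0 < a)
  have hlip := lipschitzOnWith_of_adjoint_comp_add_smul_eq A y hu (half_pos ha)
  exact ((hlip.continuousOn a (half_le_self ha.le)).continuousAt
    (Ici_mem_nhds (half_lt_self ha))).continuousWithinAt

theorem exists_discrepancy_eq
    (hu : ∀ a > 0, adjoint A (A (u a)) + a • u a = adjoint A y) {L c : ℝ}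
    (hL : Tendsto (fun a => ‖A (u a) - y‖) (𝓝[>] 0) (𝓝 L)) (hLc : L < c) (hcy : c < ‖y‖) :
    ∃ a > 0, ‖A (u a) - y‖ = c := by
  obtain ⟨a₀, ha₀c, ha₀⟩ := ((hL.eventually_lt_const hLc).and self_mem_nhdsWithin).exists
  obtain ⟨a₁, hca₁, ha₀₁⟩ :=
    (((tendsto_discrepancy_atTop A y hu).eventually_const_lt hcy).and
      (eventually_ge_atTop a₀)).exists
  have hcont : ContinuousOn (fun a => ‖A (u a) - y‖) (Icc a₀ a₁) :=
    ((A.continuous.comp_continuousOn (continuousOn_of_adjoint_comp_add_smul_eq A y hu)).sub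
      continuousOn_const).norm.mono fun a ha => (mem_Ioi.mp ha₀).trans_le ha.1
  obtain ⟨a, ha, hac⟩ := intermediate_value_Icc ha₀₁ hcont ⟨ha₀c.le, hca₁.le⟩
  exact ⟨a, (mem_Ioi.mp ha₀).trans_le ha.1, hac⟩

end Discrepancy

end TikhonovRegularization

theorem discrepancy_limits_and_existence_general
    {H : Type*} [NormedAddCommGroup H] [InnerProductSpace ℝ H] [CompleteSpace H]
    (A : H →L[ℝ] H) (f e fδ : H) (δ : ℝ)
    (hf : f ∈ closure (Set.range A)) (hfδ : fδ = f + e) (he : ‖e‖ ≤ δ)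
    (u : ℝ → H)
    (hu : ∀ a > (0:ℝ), (adjoint A).comp A (u a) + a • (u a) = adjoint A fδ) :
    Tendsto (fun a => ‖A (u a) - fδ‖) atTop (nhds ‖fδ‖) ∧
    ∃ L : ℝ,
      Tendsto (fun a => ‖A (u a) - fδ‖) (nhdsWithin 0 (Set.Ioi 0)) (nhds L) ∧
      L ≤ δ ∧
      ∀ c : ℝ, L < c * δ → c * δ < ‖fδ‖ →
        ∃ a > (0:ℝ), ‖A (u a) - fδ‖ = c * δ := by
  have hL := tendsto_discrepancy_nhdsGT_zero A fδ hu
  refine ⟨tendsto_discrepancy_atTop A fδ hu, _, hL, ?_,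
    fun c => exists_discrepancy_eq A fδ hu hL⟩
  calc _ ≤ infDist fδ (range A) := limit_discrepancy_le_infDist A fδ hu hL
    _ = infDist fδ (closure (range A)) := infDist_closure.symm
    _ ≤ ‖e‖ := (infDist_le_dist_of_mem hf).trans_eq (by rw [hfδ, dist_eq_norm, add_sub_cancel_left])
    _ ≤ δ := he

theorem discrepancy_limits_and_existence
    {H : Type*} [NormedAddCommGroup H] [InnerProductSpace ℝ H] [CompleteSpace H]
    (A : H →L[ℝ] H) (f e fδ : H) (δ : ℝ) (hδ : 0 < δ)
    (hf : f ∈ closure (Set.range A)) (hfδ : fδ = f + e) (he : ‖e‖ ≤ δ)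
    (u : ℝ → H)
    (hu : ∀ a > (0:ℝ), (adjoint A).comp A (u a) + a • (u a) = adjoint A fδ)
    (hnorm : δ < ‖fδ‖) :
    Tendsto (fun a => ‖A (u a) - fδ‖) atTop (nhds ‖fδ‖) ∧
    ∃ L : ℝ,
      Tendsto (fun a => ‖A (u a) - fδ‖) (nhdsWithin 0 (Set.Ioi 0)) (nhds L) ∧
      L ≤ δ ∧
      ∀ c : ℝ, L < c * δ → c * δ < ‖fδ‖ →
        ∃ a > (0:ℝ), ‖A (u a) - fδ‖ = c * δ :=
  discrepancy_limits_and_existence_general A f e fδ δ hf hfδ he u hu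
end

section
/- For the iteration u_{n+1} = e^{−h_n} u_n + (1 − e^{−h_n}) v_n in a normed space, if ‖v_n − y‖ ≤ ε for all n and Σ h_n = ∞, then limsup_n ‖u_n − y‖ ≤ ε. -/
/-!
Writing `d n = ‖u n - y‖`, convexity of the norm gives `d (n+1) - ε ≤ e^{-h n} (d n - ε)`, so the
excess over `ε` is at most `e^{-(h 0 + ⋯ + h (n-1))} (d 0 - ε)`, which tends to `0` because the
partial sums of `h` diverge.
-/

open Filter Topology Real

theorem norm_smul_add_one_sub_smul_sub_le {E : Type*} [SeminormedAddCommGroup E]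
    [NormedSpace ℝ E] {a : ℝ} (ha₀ : 0 ≤ a) (ha₁ : a ≤ 1) (x z y : E) :
    ‖a • x + (1 - a) • z - y‖ ≤ a * ‖x - y‖ + (1 - a) * ‖z - y‖ := by
  have hsplit : a • x + (1 - a) • z - y = a • (x - y) + (1 - a) • (z - y) := by module
  calc ‖a • x + (1 - a) • z - y‖
      ≤ ‖a • (x - y)‖ + ‖(1 - a) • (z - y)‖ := hsplit ▸ norm_add_le _ _
    _ = a * ‖x - y‖ + (1 - a) * ‖z - y‖ := by
      rw [norm_smul_of_nonneg ha₀, norm_smul_of_nonneg (sub_nonneg.2 ha₁)]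

theorem le_exp_neg_sum_mul_of_le_exp_neg_mul {a h : ℕ → ℝ}
    (ha : ∀ n, a (n + 1) ≤ exp (-h n) * a n) (n : ℕ) :
    a n ≤ exp (-∑ i ∈ Finset.range n, h i) * a 0 := by
  induction n with
  | zero => simp
  | succ n ih =>
    calc a (n + 1) ≤ exp (-h n) * a n := ha n
      _ ≤ exp (-h n) * (exp (-∑ i ∈ Finset.range n, h i) * a 0) :=
        mul_le_mul_of_nonneg_left ih (exp_pos _).le
      _ = exp (-∑ i ∈ Finset.range (n + 1), h i) * a 0 := by
        rw [Finset.sum_range_succ, neg_add, exp_add]; ring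

theorem limsup_le_of_le_add_of_tendsto_zero {α : Type*} {l : Filter α} [l.NeBot]
    {d e : α → ℝ} {c : ℝ} (hd : IsBoundedUnder (· ≥ ·) l d) (hde : ∀ x, d x ≤ c + e x)
    (he : Tendsto e l (𝓝 0)) :
    limsup d l ≤ c := by
  have hce : Tendsto (fun x => c + e x) l (𝓝 c) := by simpa using he.const_add c
  calc limsup d l ≤ limsup (fun x => c + e x) l :=
        limsup_le_limsup (Eventually.of_forall hde) hd.isCoboundedUnder_le hce.isBoundedUnder_le
    _ = c := hce.limsup_eq

theorem iteration_limsup_le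
    {X : Type*} [NormedAddCommGroup X] [NormedSpace ℝ X]
    (y : X) (ε : ℝ) (v : ℕ → X) (hv : ∀ n, ‖v n - y‖ ≤ ε)
    (h : ℕ → ℝ) (hh : ∀ n, 0 < h n)
    (hdiv : Tendsto (fun n => ∑ i ∈ Finset.range n, h i) atTop atTop)
    (u : ℕ → X)
    (hrec : ∀ n, u (n + 1) =
      Real.exp (-(h n)) • u n + (1 - Real.exp (-(h n))) • v n) :
    limsup (fun n => ‖u n - y‖) atTop ≤ ε := by
  have hstep : ∀ n, ‖u (n + 1) - y‖ - ε ≤ exp (-h n) * (‖u n - y‖ - ε) := fun n => by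
    have hexp_le_one : exp (-h n) ≤ 1 := exp_le_one_iff.2 (neg_nonpos.2 (hh n).le)
    have hconv := norm_smul_add_one_sub_smul_sub_le (exp_pos (-h n)).le hexp_le_one (u n) (v n) y
    have hv' := mul_le_mul_of_nonneg_left (hv n) (sub_nonneg.2 hexp_le_one)
    rw [hrec n]
    linarith
  have hexcess := le_exp_neg_sum_mul_of_le_exp_neg_mul (a := fun n => ‖u n - y‖ - ε) hstep
  have hdecay : Tendsto (fun n => exp (-∑ i ∈ Finset.range n, h i) * (‖u 0 - y‖ - ε))
      atTop (𝓝 0) := by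
    simpa using (tendsto_exp_atBot.comp (tendsto_neg_atBot_iff.2 hdiv)).mul_const _
  exact limsup_le_of_le_add_of_tendsto_zero (isBoundedUnder_of ⟨0, fun n => norm_nonneg _⟩)
    (fun n => by linarith [hexcess n]) hdecay
end

section
/- Let a(t) = a₀/(1+t) with a₀ > 0 and let u(t) solve u' = −u + (T + a(t)I)^{-1} A* f, u(0) = u₀, where f = A y, y ⟂ ker A, A bounded linear on a Hilbert space, T = A*A. Then lim_{t→∞} u(t) = y. -/
open ContinuousLinearMap Filter

/-!
The regularized solutions `v t` converge to `y`: testing the Tikhonov equation against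
`v t - y` gives `‖v t - y‖² ≤ -⟪y, v t - y⟫` and `‖A (v t - y)‖² ≤ a(t) ‖y‖²`, and since
`y ⊥ ker A` lies in the closure of the range of `A*`, the inner product `⟪y, v t - y⟫`
is controlled by `⟪z, A (v t - y)⟫` up to an arbitrarily small error.
The trajectory then follows `v`: `h = ‖u - y‖²` satisfies `h' ≤ -h + ‖v - y‖²`,
and Grönwall's inequality gives `limsup h ≤ limsup ‖v - y‖² = 0`.
-/

open scoped RealInnerProductSpace

theorem tendsto_nhds_of_forall_eventually_norm_sub_sq_lt {ι E : Type*} [SeminormedAddCommGroup E]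
    {l : Filter ι} {f : ι → E} {c : E} (h : ∀ ε > 0, ∀ᶠ i in l, ‖f i - c‖ ^ 2 < ε) :
    Tendsto f l (nhds c) :=
  Metric.tendsto_nhds.2 fun ε hε => (h (ε ^ 2) (by positivity)).mono fun i hi => by
    rw [dist_eq_norm]
    exact (pow_lt_pow_iff_left₀ (norm_nonneg _) hε.le two_ne_zero).1 hi

section Tikhonov

variable {E F : Type*} [NormedAddCommGroup E] [InnerProductSpace ℝ E] [CompleteSpace E]
  [NormedAddCommGroup F] [InnerProductSpace ℝ F] [CompleteSpace F]
  (A : E →L[ℝ] F) {y w : E} {a : ℝ}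

theorem tikhonov_norm_sq_identity (hw : adjoint A (A w) + a • w = adjoint A (A y)) :
    ‖A (w - y)‖ ^ 2 + a * ‖w - y‖ ^ 2 = -(a * ⟪y, w - y⟫) := by
  have hzero : adjoint A (A (w - y)) + a • (w - y) + a • y = 0 := by
    rw [add_assoc, ← smul_add, sub_add_cancel, map_sub, map_sub, sub_add_eq_add_sub, hw, sub_self]
  have := congrArg (⟪·, w - y⟫) hzero
  simp only [inner_add_left, adjoint_inner_left, real_inner_smul_left, real_inner_self_eq_norm_sq,
    inner_zero_left] at this
  linarith

theorem tikhonov_norm_sq_sub_le (ha : 0 < a) (hw : adjoint A (A w) + a • w = adjoint A (A y)) :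
    ‖w - y‖ ^ 2 ≤ -⟪y, w - y⟫ := by
  have := tikhonov_norm_sq_identity A hw
  refine le_of_mul_le_mul_left ?_ ha
  nlinarith [sq_nonneg ‖A (w - y)‖]

theorem tikhonov_norm_sub_le (ha : 0 < a) (hw : adjoint A (A w) + a • w = adjoint A (A y)) :
    ‖w - y‖ ≤ ‖y‖ := by
  have h₁ := tikhonov_norm_sq_sub_le A ha hw
  have h₂ := neg_le_of_abs_le (abs_real_inner_le_norm y (w - y))
  nlinarith [norm_nonneg (w - y), norm_nonneg y]

theorem tikhonov_norm_apply_sub_le (ha : 0 < a)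
    (hw : adjoint A (A w) + a • w = adjoint A (A y)) :
    ‖A (w - y)‖ ≤ √a * ‖y‖ := by
  have hid := tikhonov_norm_sq_identity A hw
  have hinner := neg_le_of_abs_le (abs_real_inner_le_norm y (w - y))
  have hle := tikhonov_norm_sub_le A ha hw
  have hsq : ‖A (w - y)‖ ^ 2 ≤ a * ‖y‖ ^ 2 := by
    nlinarith [mul_le_mul_of_nonneg_left hinner ha.le,
      mul_le_mul_of_nonneg_left hle (mul_nonneg ha.le (norm_nonneg y)),
      mul_nonneg ha.le (sq_nonneg ‖w - y‖)]
  rw [← Real.sqrt_sq (norm_nonneg y), ← Real.sqrt_mul ha.le]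
  exact Real.le_sqrt_of_sq_le hsq

theorem tikhonov_norm_sq_sub_le_of_adjoint (ha : 0 < a)
    (hw : adjoint A (A w) + a • w = adjoint A (A y)) (z : F) :
    ‖w - y‖ ^ 2 ≤ ‖y - adjoint A z‖ * ‖y‖ + ‖z‖ * ‖A (w - y)‖ := by
  have hsplit : -⟪y, w - y⟫ = -⟪y - adjoint A z, w - y⟫ - ⟪z, A (w - y)⟫ := by
    rw [inner_sub_left, adjoint_inner_left]; ring
  have h₁ := neg_le_of_abs_le (abs_real_inner_le_norm (y - adjoint A z) (w - y))
  have h₂ := neg_le_of_abs_le (abs_real_inner_le_norm z (A (w - y)))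
  have h₃ := mul_le_mul_of_nonneg_left (tikhonov_norm_sub_le A ha hw)
    (norm_nonneg (y - adjoint A z))
  linarith [tikhonov_norm_sq_sub_le A ha hw]

theorem tendsto_tikhonov {ι : Type*} {l : Filter ι} (hy : y ∈ A.kerᗮ)
    {a : ι → ℝ} {w : ι → E} (ha : Tendsto a l (nhdsWithin 0 (Set.Ioi 0)))
    (hw : ∀ᶠ i in l, adjoint A (A (w i)) + a i • w i = adjoint A (A y)) :
    Tendsto w l (nhds y) := by
  have ha_pos : ∀ᶠ i in l, 0 < a i := ha.eventually self_mem_nhdsWithin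
  have hAw : Tendsto (fun i => ‖A (w i - y)‖) l (nhds 0) := by
    have hbound : Tendsto (fun i => √(a i) * ‖y‖) l (nhds 0) := by
      simpa using ((ha.mono_right nhdsWithin_le_nhds).sqrt).mul_const ‖y‖
    refine squeeze_zero' (.of_forall fun _ => norm_nonneg _) ?_ hbound
    filter_upwards [ha_pos, hw] with i hai hwi using tikhonov_norm_apply_sub_le A hai hwi
  refine tendsto_nhds_of_forall_eventually_norm_sub_sq_lt fun ε hε => ?_
  rw [orthogonal_ker, ← SetLike.mem_coe, Submodule.topologicalClosure_coe] at hy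
  have hnear : ∀ᶠ x in nhds y, ‖y - x‖ * ‖y‖ < ε / 2 :=
    ContinuousAt.eventually_lt (by fun_prop) continuousAt_const (by simpa using half_pos hε)
  obtain ⟨_, hz, z, rfl⟩ := mem_closure_iff_nhds.1 hy _ hnear
  have hsmall : ∀ᶠ i in l, ‖z‖ * ‖A (w i - y)‖ < ε / 2 :=
    (hAw.const_mul ‖z‖).eventually_lt_const (by rw [mul_zero]; exact half_pos hε)
  filter_upwards [ha_pos, hw, hsmall] with i hai hwi hi
  have hz' : ‖y - adjoint A z‖ * ‖y‖ < ε / 2 := hz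
  linarith [tikhonov_norm_sq_sub_le_of_adjoint A hai hwi z]

end Tikhonov

theorem le_gronwallBound_of_hasDerivAt {f f' : ℝ → ℝ} {K ε a : ℝ}
    (hf : ∀ x ≥ a, HasDerivAt f (f' x) x) (bound : ∀ x ≥ a, f' x ≤ K * f x + ε) :
    ∀ x ≥ a, f x ≤ gronwallBound (f a) K ε (x - a) := fun x hx =>
  le_gronwallBound_of_liminf_deriv_right_le (b := x)
    (fun y hy => (hf y hy.1).continuousAt.continuousWithinAt)
    (fun y hy _ hr => (hf y hy.1).hasDerivWithinAt.liminf_right_slope_le hr) le_rfl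
    (fun y hy => bound y hy.1) x ⟨hx, le_rfl⟩

theorem tendsto_gronwallBound_of_neg {δ K ε : ℝ} (hK : K < 0) :
    Tendsto (gronwallBound δ K ε) atTop (nhds (-ε / K)) := by
  rw [gronwallBound_of_K_ne_0 hK.ne]
  have hexp : Tendsto (fun x => Real.exp (K * x)) atTop (nhds 0) :=
    Real.tendsto_exp_atBot.comp (tendsto_id.const_mul_atTop_of_neg hK)
  convert (hexp.const_mul δ).add ((hexp.sub_const 1).const_mul (ε / K)) using 2
  ring

theorem two_mul_inner_sub_self_le {E : Type*} [NormedAddCommGroup E] [InnerProductSpace ℝ E]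
    (p q : E) : 2 * ⟪p, q - p⟫ ≤ ‖q‖ ^ 2 - ‖p‖ ^ 2 := by
  rw [inner_sub_right, real_inner_self_eq_norm_sq]
  nlinarith [norm_sub_sq_real p q, sq_nonneg ‖p - q‖]

theorem tendsto_of_hasDerivAt_eq_neg_add {E : Type*} [NormedAddCommGroup E]
    [InnerProductSpace ℝ E] {u v : ℝ → E} {c : E}
    (hu : ∀ᶠ t in atTop, HasDerivAt u (-u t + v t) t) (hv : Tendsto v atTop (nhds c)) :
    Tendsto u atTop (nhds c) := by
  refine tendsto_nhds_of_forall_eventually_norm_sub_sq_lt fun ε hε => ?_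
  have hvc : Tendsto (fun t => ‖v t - c‖ ^ 2) atTop (nhds 0) := by
    simpa using (tendsto_iff_norm_sub_tendsto_zero.1 hv).pow 2
  obtain ⟨T, hT⟩ := eventually_atTop.1 (hu.and (hvc.eventually_lt_const (half_pos hε)))
  have hderiv :
      ∀ t ≥ T, HasDerivAt (fun s => ‖u s - c‖ ^ 2) (2 * ⟪u t - c, -u t + v t⟫) t :=
    fun t ht => ((hT t ht).1.sub_const c).norm_sq
  have hbound : ∀ t ≥ T, 2 * ⟪u t - c, -u t + v t⟫ ≤ -1 * ‖u t - c‖ ^ 2 + ε / 2 := by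
    intro t ht
    rw [show -u t + v t = (v t - c) - (u t - c) by abel]
    linarith [two_mul_inner_sub_self_le (u t - c) (v t - c), (hT t ht).2]
  have hlim : Tendsto (fun t => gronwallBound (‖u T - c‖ ^ 2) (-1) (ε / 2) (t - T)) atTop
      (nhds (ε / 2)) := by
    simpa [Function.comp_def, ← sub_eq_add_neg] using
      (tendsto_gronwallBound_of_neg neg_one_lt_zero).comp
        (tendsto_atTop_add_const_right atTop (-T) tendsto_id)
  filter_upwards [hlim.eventually_lt_const (half_lt_self hε), eventually_ge_atTop T] with t h ht
  exact (le_gronwallBound_of_hasDerivAt hderiv hbound t ht).trans_lt h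

theorem dsm_convergence_general
    {H : Type*} [NormedAddCommGroup H] [InnerProductSpace ℝ H] [CompleteSpace H]
    (A : H →L[ℝ] H) (y : H) (hy : y ∈ (LinearMap.ker (A : H →ₗ[ℝ] H))ᗮ)
    (a₀ : ℝ) (ha₀ : 0 < a₀)
    (v : ℝ → H)
    (hv : ∀ t ≥ (0:ℝ),
      (adjoint A).comp A (v t) + (a₀ / (1 + t)) • v t = adjoint A (A y))
    (u : ℝ → H)
    (hODE : ∀ t ≥ (0:ℝ), HasDerivAt u (-(u t) + v t) t) :
    Tendsto u atTop (nhds y) := by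
  have ha : Tendsto (fun t : ℝ => a₀ / (1 + t)) atTop (nhdsWithin 0 (Set.Ioi 0)) := by
    refine tendsto_nhdsWithin_iff.2 ⟨tendsto_const_nhds.div_atTop ?_, ?_⟩
    · exact tendsto_atTop_add_const_left atTop 1 tendsto_id
    · filter_upwards [eventually_ge_atTop 0] with t ht
      exact div_pos ha₀ (by linarith)
  have hvy : Tendsto v atTop (nhds y) :=
    tendsto_tikhonov A hy ha (eventually_atTop.2 ⟨0, hv⟩)
  exact tendsto_of_hasDerivAt_eq_neg_add (eventually_atTop.2 ⟨0, hODE⟩) hvy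

theorem dsm_convergence
    {H : Type*} [NormedAddCommGroup H] [InnerProductSpace ℝ H] [CompleteSpace H]
    (A : H →L[ℝ] H) (y : H) (hy : y ∈ (LinearMap.ker (A : H →ₗ[ℝ] H))ᗮ)
    (a₀ : ℝ) (ha₀ : 0 < a₀)
    (v : ℝ → H)
    (hv : ∀ t ≥ (0:ℝ),
      (adjoint A).comp A (v t) + (a₀ / (1 + t)) • v t = adjoint A (A y))
    (u : ℝ → H) (u₀ : H) (hu0 : u 0 = u₀)
    (hODE : ∀ t ≥ (0:ℝ), HasDerivAt u (-(u t) + v t) t) :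
    Tendsto u atTop (nhds y) :=
  dsm_convergence_general A y hy a₀ ha₀ v hv u hODE
end
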